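/- Let d = 1, T = 2, R(z) = |z| (so ∂R(0) = [−1,1]), E(z) = (1/2)z² − z, z₀ = 0, and ℓ ≡ 0 on [0,2]. Define S = 5/2 and, for s ∈ [0,5/2]: ẑ(s) = 0 on [0,1], ẑ(s) = s − 1 on (1, 3/2), ẑ(s) = 1/2 on [3/2, 5/2]; t̂(s) = s on [0,1], t̂(s) = 1 on (1, 3/2), t̂(s) = s − 1/2 on [3/2, 5/2]; ℓ̂(s) = 0 on [0,1], ℓ̂(s) = s − 1 on (1, 3/2), ℓ̂(s) = 0 on [3/2, 5/2]. Then (S, t̂, ẑ, ℓ̂) satisfies conditions (2.1)–(2.4) with D_zÎ(s,z) = z − 1 − ℓ̂(s) and ℓ̂(s) = ℓ(t̂(s)) = 0 for all s in the set M = (0,1) ∪ (3/2, 5/2) where t̂ is strictly increasing; hence it is a relaxed solution associated with the zero load ℓ ≡ 0, although ẑ is not constantly equal to the (locally stable) initial state z₀ = 0. (Section 4.2) -/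

import Mathlib

open MeasureTheory Set Filter
open scoped Topology NNReal

noncomputable section

/-- `dist(η, [-1,1]) = max(|η| - 1, 0)`, the distance to `∂R(0)` for `R = |·|`. -/
def dist1 (η : ℝ) : ℝ := max (|η| - 1) 0

/-- The energy `E(z) = z²/2 - z` of the one-dimensional example. -/
def En1 (z : ℝ) : ℝ := (1 / 2) * z ^ 2 - z

/-- The set `M` where `t̂` is strictly increasing. -/
def Mset (S : ℝ) (that : ℝ → ℝ) : Set ℝ :=
  {s | s ∈ Ioo 0 S ∧ ∀ s₁ ∈ Icc 0 S, ∀ s₂ ∈ Icc 0 S, s₁ < s → s < s₂ → that s₁ < that s₂}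

/-- Conditions (2.1)-(2.4) in the one-dimensional example, where `R = |·|` and
`D_zÎ(s,z) = z - 1 - ℓ̂(s)`; `t'`, `z'` denote the a.e. derivatives of `t̂`, `ẑ`. -/
structure Conds1d (T z₀ S : ℝ) (that zhat lhat t' z' : ℝ → ℝ) : Prop where
  deriv_t : ∀ᵐ s ∂(volume.restrict (Ioo 0 S)), HasDerivAt that (t' s) s
  deriv_z : ∀ᵐ s ∂(volume.restrict (Ioo 0 S)), HasDerivAt zhat (z' s) s
  t_init : that 0 = 0
  t_final : that S = T
  z_init : zhat 0 = z₀
  c22 : ∀ᵐ s ∂(volume.restrict (Ioo 0 S)),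
      0 ≤ t' s ∧ t' s * dist1 (-(zhat s - 1 - lhat s)) = 0
  c23 : ∀ᵐ s ∂(volume.restrict (Ioo 0 S)),
      t' s + |z' s| + |z' s| * dist1 (-(zhat s - 1 - lhat s)) = 1
  c24 : ∀ s₁ s₂ : ℝ, 0 ≤ s₁ → s₁ ≤ s₂ → s₂ ≤ S →
      En1 (zhat s₂) +
          (∫ r in s₁..s₂, (|z' r| + |z' r| * dist1 (-(zhat r - 1 - lhat r)))) =
        En1 (zhat s₁) + ∫ r in s₁..s₂, lhat r * z' r

/-- One-sided limits of the load, with the conventions at the endpoints. -/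
def OneSided1d (T : ℝ) (l lL lR : ℝ → ℝ) : Prop :=
  (∀ t ∈ Ioc (0 : ℝ) T, Tendsto l (nhdsWithin t (Iio t)) (nhds (lL t))) ∧ lL 0 = l 0 ∧
    (∀ t ∈ Ico (0 : ℝ) T, Tendsto l (nhdsWithin t (Ioi t)) (nhds (lR t))) ∧ lR T = l T

/-- The compatibility condition (2.5). -/
def Compat1d (T S : ℝ) (that lhat l lL lR : ℝ → ℝ) : Prop :=
  ∀ tstar ∈ Icc (0 : ℝ) T, ∃ sstar ∈ Icc (0 : ℝ) S, that sstar = tstar ∧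
    lhat sstar ∈ ({l tstar, lL tstar, lR tstar} : Set ℝ) ∧
    ∀ s ∈ Icc (0 : ℝ) S, that s = tstar →
      (s < sstar → lhat s = lL tstar) ∧ (sstar < s → lhat s = lR tstar)

/-- The limit parametrized time `t̂` (Section 4.2). -/
def that (s : ℝ) : ℝ := if s ≤ 1 then s else if s < 3 / 2 then 1 else s - 1 / 2

/-- The limit parametrized state `ẑ` (Section 4.2). -/
def zhat (s : ℝ) : ℝ := if s ≤ 1 then 0 else if s < 3 / 2 then s - 1 else 1 / 2

/-- The limit parametrized load `ℓ̂` of (4.34). -/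
def lhat (s : ℝ) : ℝ := if s ≤ 1 then 0 else if s < 3 / 2 then s - 1 else 0

/-- The a.e. derivative of `t̂`. -/
def t'lim (s : ℝ) : ℝ := if s ≤ 1 then 1 else if s < 3 / 2 then 0 else 1

/-- The a.e. derivative of `ẑ`. -/
def z'lim (s : ℝ) : ℝ := if s ≤ 1 then 0 else if s < 3 / 2 then 1 else 0

/-!
`ẑ` is the clamp of `s - 1` to `[0, 1/2]` and `t̂ = s - ẑ`, so both are Lipschitz, and `ℓ̂` is `ẑ`
switched off at `s = 3/2`, hence of bounded variation. On `(1, 3/2)` the load `ℓ̂` exactly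
compensates the growth of `ẑ`, so the driving force `-D_zÎ = 1 - ẑ + ℓ̂` stays in
`∂R(0) = [-1, 1]` and every `dist` term vanishes. Since moreover `ℓ̂ ẑ' = ẑ ẑ'`, the energy balance
(2.4) is the chain rule for `E ∘ ẑ`, integrated by the fundamental theorem of calculus off the two
kinks `{1, 3/2}`. Finally `t̂` is constant on `(1, 3/2)`, so `M` misses the only interval where
`ℓ̂ ≠ 0`.
-/

lemma zhat_eq_max_min (s : ℝ) : zhat s = max 0 (min (s - 1) (1 / 2)) := by
  unfold zhat
  split_ifs
  · rw [min_eq_left (by linarith), max_eq_left (by linarith)]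
  · rw [min_eq_left (by linarith), max_eq_right (by linarith)]
  · rw [min_eq_right (by linarith), max_eq_right (by norm_num)]

lemma that_eq_id_sub_zhat : that = fun s => s - zhat s := by
  ext s
  unfold that zhat
  split_ifs <;> ring

lemma t'lim_eq_one_sub_z'lim (s : ℝ) : t'lim s = 1 - z'lim s := by
  unfold t'lim z'lim
  split_ifs <;> norm_num

lemma z'lim_nonneg (s : ℝ) : 0 ≤ z'lim s := by
  unfold z'lim
  split_ifs <;> norm_num

lemma lhat_mul_z'lim (s : ℝ) : lhat s * z'lim s = zhat s * z'lim s := by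
  unfold lhat zhat z'lim
  split_ifs <;> ring

lemma lhat_eq_zhat_mul (s : ℝ) : lhat s = zhat s * if s < 3 / 2 then 1 else 0 := by
  unfold lhat zhat
  split_ifs <;> ring

lemma lhat_eq_zero_of_notMem {s : ℝ} (hs : s ∉ Ioo (1 : ℝ) (3 / 2)) : lhat s = 0 := by
  unfold lhat
  split_ifs with h₁ h₂
  exacts [rfl, absurd ⟨not_le.1 h₁, h₂⟩ hs, rfl]

lemma z'lim_eq_indicator : z'lim = (Ioo (1 : ℝ) (3 / 2)).indicator 1 := by
  ext s
  by_cases hs : s ∈ Ioo (1 : ℝ) (3 / 2)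
  · simp [z'lim, hs, hs.1.not_ge, hs.2]
  · rw [indicator_of_notMem hs]
    unfold z'lim
    split_ifs with h₁ h₂
    exacts [rfl, absurd ⟨not_le.1 h₁, h₂⟩ hs, rfl]

lemma lipschitzWith_zhat : LipschitzWith 1 zhat := by
  have := ((LipschitzWith.id.sub (LipschitzWith.const (1 : ℝ))).min_const (1 / 2)).const_max 0
  simpa only [add_zero, id, ← zhat_eq_max_min] using this

lemma lipschitzWith_that : LipschitzWith 2 that := by
  rw [that_eq_id_sub_zhat, ← one_add_one_eq_two]
  exact LipschitzWith.id.sub lipschitzWith_zhat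

lemma monotone_zhat : Monotone zhat := fun a b hab => by
  simp only [zhat_eq_max_min]
  gcongr

lemma boundedVariationOn_lhat : BoundedVariationOn lhat (Icc 0 (5 / 2)) := by
  have hz : BoundedVariationOn zhat (Icc 0 (5 / 2)) :=
    (monotone_zhat.monotoneOn _).boundedVariationOn (C := 1) fun s _ => by
      rw [zhat_eq_max_min, abs_le]
      constructor
      · linarith [le_max_left 0 (min (s - 1) (1 / 2))]
      · exact max_le (by norm_num) ((min_le_right _ _).trans (by norm_num))
  have hχ : BoundedVariationOn (fun s : ℝ => if s < 3 / 2 then (-1 : ℝ) else 0) (Icc 0 (5 / 2)) :=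
    MonotoneOn.boundedVariationOn (C := 1) (fun a _ b _ hab => by split_ifs <;> grind)
      fun s _ => by split_ifs <;> norm_num
  -- Mathlib has no sum rule for variations, so `ℓ̂ = ẑ · 1_{s < 3/2}` is written as a product
  -- with the monotone factor `-1_{s < 3/2}`.
  convert hz.bilinear_comp hχ (-ContinuousLinearMap.lsmul ℝ ℝ) using 1
  ext s
  simp only [lhat_eq_zhat_mul, neg_apply, ContinuousLinearMap.lsmul_apply, smul_eq_mul]
  split_ifs <;> ring

lemma hasDerivAt_zhat {s : ℝ} (hs : s ∉ ({1, 3 / 2} : Set ℝ)) : HasDerivAt zhat (z'lim s) s := by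
  simp only [mem_insert_iff, mem_singleton_iff, not_or] at hs
  rcases lt_or_gt_of_ne hs.1 with h₁ | h₁
  · have : zhat =ᶠ[𝓝 s] fun _ => 0 :=
      eventually_of_mem (Iio_mem_nhds h₁) fun x hx => if_pos (le_of_lt hx)
    simpa [z'lim, h₁.le] using (hasDerivAt_const s (0 : ℝ)).congr_of_eventuallyEq this
  rcases lt_or_gt_of_ne hs.2 with h₂ | h₂
  · have : zhat =ᶠ[𝓝 s] fun x => x - 1 :=
      eventually_of_mem (Ioo_mem_nhds h₁ h₂) fun x hx => by simp [zhat, hx.1.not_ge, hx.2]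
    simpa [z'lim, h₁.not_ge, h₂] using ((hasDerivAt_id s).sub_const 1).congr_of_eventuallyEq this
  · have : zhat =ᶠ[𝓝 s] fun _ => 1 / 2 :=
      eventually_of_mem (Ioi_mem_nhds h₂) fun x (hx : 3 / 2 < x) => by
        simp [zhat, show ¬x ≤ 1 by linarith, hx.le.not_gt]
    simpa [z'lim, h₁.not_ge, h₂.le.not_gt] using
      (hasDerivAt_const s (1 / 2 : ℝ)).congr_of_eventuallyEq this

lemma hasDerivAt_that {s : ℝ} (hs : s ∉ ({1, 3 / 2} : Set ℝ)) : HasDerivAt that (t'lim s) s := by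
  rw [that_eq_id_sub_zhat, t'lim_eq_one_sub_z'lim]
  exact (hasDerivAt_id s).sub (hasDerivAt_zhat hs)

lemma integral_comp_zhat_mul_z'lim {φ φ' : ℝ → ℝ} (hφ : ∀ x, HasDerivAt φ (φ' x) x)
    (hφ' : Continuous φ') {a b : ℝ} (hab : a ≤ b) :
    ∫ r in a..b, φ' (zhat r) * z'lim r = φ (zhat b) - φ (zhat a) := by
  have hz'lim : IntervalIntegrable z'lim volume a b := by
    rw [z'lim_eq_indicator]
    exact ((integrable_indicator_iff measurableSet_Ioo).2
      (integrableOn_const measure_Ioo_lt_top.ne)).intervalIntegrable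
  have hφc : Continuous φ := continuous_iff_continuousAt.2 fun x => (hφ x).continuousAt
  exact integral_eq_of_hasDerivAt_off_countable_of_le (φ ∘ zhat) _ hab
    (Set.toFinite {1, 3 / 2}).countable (hφc.comp lipschitzWith_zhat.continuous).continuousOn
    (fun x hx => (hφ (zhat x)).comp x (hasDerivAt_zhat hx.2))
    (hz'lim.continuousOn_mul (hφ'.comp lipschitzWith_zhat.continuous).continuousOn)

lemma dist1_eq_zero_of_abs_le {η : ℝ} (h : |η| ≤ 1) : dist1 η = 0 :=
  max_eq_right (by linarith)

lemma dist1_drivingForce_eq_zero (s : ℝ) : dist1 (-(zhat s - 1 - lhat s)) = 0 := by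
  refine dist1_eq_zero_of_abs_le (abs_le.2 ?_)
  unfold zhat lhat
  split_ifs <;> constructor <;> linarith

lemma energy_balance {s₁ s₂ : ℝ} (h : s₁ ≤ s₂) :
    En1 (zhat s₂) + (∫ r in s₁..s₂, (|z'lim r| + |z'lim r| * dist1 (-(zhat r - 1 - lhat r)))) =
      En1 (zhat s₁) + ∫ r in s₁..s₂, lhat r * z'lim r := by
  have hdiss : ∀ r, |z'lim r| + |z'lim r| * dist1 (-(zhat r - 1 - lhat r)) = 1 * z'lim r :=
    fun r => by
      rw [dist1_drivingForce_eq_zero, mul_zero, add_zero, one_mul, abs_of_nonneg (z'lim_nonneg r)]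
  simp only [hdiss, lhat_mul_z'lim]
  rw [integral_comp_zhat_mul_z'lim (φ' := fun _ => 1) hasDerivAt_id' continuous_const h,
    integral_comp_zhat_mul_z'lim (φ := fun x => x ^ 2 / 2) (φ' := fun x => x)
      (fun x => by simpa using (hasDerivAt_pow 2 x).div_const 2) continuous_id h]
  unfold En1
  ring

lemma conds1d_limit : Conds1d 2 0 (5 / 2) that zhat lhat t'lim z'lim := by
  have hae : ∀ᵐ s ∂(volume.restrict (Ioo 0 (5 / 2))), s ∉ ({1, 3 / 2} : Set ℝ) :=
    ae_restrict_of_ae ((Set.toFinite _).countable.ae_notMem _)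
  refine ⟨hae.mono fun s => hasDerivAt_that, hae.mono fun s => hasDerivAt_zhat,
    by norm_num [that], by norm_num [that], by norm_num [zhat], .of_forall fun s => ?_,
    .of_forall fun s => ?_, fun s₁ s₂ _ h _ => energy_balance h⟩
  · rw [dist1_drivingForce_eq_zero, mul_zero]
    exact ⟨by unfold t'lim; split_ifs <;> norm_num, rfl⟩
  · rw [dist1_drivingForce_eq_zero, mul_zero, t'lim_eq_one_sub_z'lim,
      abs_of_nonneg (z'lim_nonneg s)]
    ring

lemma Mset_subset_compl_of_eqOn {S a b c : ℝ} {f : ℝ → ℝ} (ha : 0 ≤ a) (hb : b ≤ S)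
    (hf : EqOn f (fun _ => c) (Ioo a b)) : Mset S f ⊆ (Ioo a b)ᶜ := by
  rintro s ⟨-, hstrict⟩ ⟨has, hsb⟩
  have := hstrict ((a + s) / 2) ⟨by linarith, by linarith⟩ ((s + b) / 2) ⟨by linarith, by linarith⟩
    (by linarith) (by linarith)
  rw [hf ⟨by linarith, by linarith⟩, hf ⟨by linarith, by linarith⟩] at this
  exact this.false

lemma ae_lhat_eq_zero_on_Mset : ∀ᵐ s ∂(volume.restrict (Mset (5 / 2) that)), lhat s = 0 := by
  have hconst : EqOn that (fun _ => 1) (Ioo 1 (3 / 2)) := fun s hs => by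
    simp [that, hs.1.not_ge, hs.2]
  exact ae_restrict_of_ae_restrict_of_subset
    (Mset_subset_compl_of_eqOn zero_le_one (by norm_num) hconst)
    (ae_restrict_of_forall_mem measurableSet_Ioo.compl fun s => lhat_eq_zero_of_notMem)

/-- **Section 4.2.** `(5/2, t̂, ẑ, ℓ̂)` is a relaxed solution associated with the zero load
`ℓ ≡ 0`: it satisfies (2.1)-(2.4) and `ℓ̂(s) = ℓ(t̂(s)) = 0` a.e. on the set `M` where `t̂`
is strictly increasing, although `ẑ` is not constantly equal to the (locally stable)
initial state `z₀ = 0`. -/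
theorem second_counterexample_relaxed_limit :
    (∃ L : ℝ≥0, LipschitzOnWith L that (Icc 0 (5 / 2))) ∧
    (∃ L : ℝ≥0, LipschitzOnWith L zhat (Icc 0 (5 / 2))) ∧
    BoundedVariationOn lhat (Icc 0 (5 / 2)) ∧
    Conds1d 2 0 (5 / 2) that zhat lhat t'lim z'lim ∧
    (∀ᵐ s ∂(volume.restrict (Mset (5 / 2) that)), lhat s = (0 : ℝ)) ∧
    ¬ (∀ s ∈ Icc (0 : ℝ) (5 / 2), zhat s = 0) :=
  ⟨⟨2, lipschitzWith_that.lipschitzOnWith⟩, ⟨1, lipschitzWith_zhat.lipschitzOnWith⟩,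
    boundedVariationOn_lhat, conds1d_limit, ae_lhat_eq_zero_on_Mset,
    fun h => absurd (h (3 / 2) ⟨by norm_num, by norm_num⟩) (by norm_num [zhat])⟩

end
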